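/- For all n ≥ 1 and k ≥ 1, the descent generating function of the set {w ∈ 𝔖_{n+k+1} : s(w) ∈ 𝔖_{n+1,k}, w(1) ≤ n+k−1, and w(n+k+1) = n+k+1}, i.e. ∑ x^{des(w)} over this set, equals N_{n,k}(x) − x·N_{n−1,k}(x). -/

import Mathlib

open scoped Classical
open Polynomial

noncomputable section

/-- The number of descents of a permutation in one-line notation. -/
def descents {n : ℕ} (w : Equiv.Perm (Fin n)) : ℕ :=
  (Finset.univ.filter fun i : Fin n =>
    ∃ j : Fin n, (j : ℕ) = (i : ℕ) + 1 ∧ w j < w i).card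

/-- The Eulerian polynomial `E_n(x)`. -/
def Eul (n : ℕ) : Polynomial ℚ :=
  ∑ w : Equiv.Perm (Fin n), (X : Polynomial ℚ) ^ descents w

/-- One-line notation of a permutation of `Fin m`, as a list of values in `{1, …, m}`. -/
def oneLine {m : ℕ} (w : Equiv.Perm (Fin m)) : List ℕ :=
  List.ofFn fun i => (w i : ℕ) + 1

/-- Fueled version of the stack-sorting map: `s(L m R) = s(L) s(R) m` for `m` the maximum. -/
def stackSortFuel : ℕ → List ℕ → List ℕ
  | 0, _ => []
  | _ + 1, [] => []
  | f + 1, a :: l =>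
      let m := (a :: l).foldr max 0
      let i := (a :: l).idxOf m
      stackSortFuel f ((a :: l).take i) ++ stackSortFuel f ((a :: l).drop (i + 1)) ++ [m]

/-- The stack-sorting map `s` on lists of naturals. -/
def stackSort (w : List ℕ) : List ℕ := stackSortFuel w.length w

/-- `s(w) ∈ 𝔖_{m-k,k}`, i.e. the stack-sorting image of `w ∈ 𝔖_m` fixes all
(1-indexed) positions `> k`. -/
def SortsInto (m k : ℕ) (w : Equiv.Perm (Fin m)) : Prop :=
  ∀ i : ℕ, k ≤ i → i < m → (stackSort (oneLine w)).getD i 0 = i + 1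

/-- `N_{n,k}(x)`: descent generating function of `{w ∈ 𝔖_{n+k} : s(w) ∈ 𝔖_{n,k}}`. -/
def Nnk (n k : ℕ) : Polynomial ℚ :=
  ∑ w ∈ Finset.univ.filter (fun w : Equiv.Perm (Fin (n + k)) => SortsInto (n + k) k w),
    (X : Polynomial ℚ) ^ descents w

/-!
Write `N = n + k`. Deleting the fixed last letter `N + 1` of `w` changes neither its descents nor,
apart from that last letter, its stack-sorted image, because `s(u (N+1)) = s(u) (N+1)`. So the left
side counts the `u ∈ 𝔖_N` with `s(u) ∈ 𝔖_{n,k}` and `u(1) ≠ N`: it is `N_{n,k}` minus the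
contribution of the words `u = N v`. For those `s(u) = s(v) N`, so `s(u) ∈ 𝔖_{n,k}` iff
`s(v) ∈ 𝔖_{n-1,k}`, and the leading `N` adds exactly one descent since `v` is nonempty; they
contribute `x N_{n-1,k}`.
-/

open Finset

lemma foldr_max_zero_mem {l : List ℕ} (hl : l ≠ []) : l.foldr max 0 ∈ l :=
  List.maximum_mem (List.foldr_max_of_ne_nil hl).symm

lemma foldr_max_zero_eq_of_mem {l : List ℕ} {M : ℕ} (hM : M ∈ l) (h : ∀ x ∈ l, x ≤ M) :
    l.foldr max 0 = M :=
  le_antisymm (List.max_le_of_forall_le l M h) (List.le_max_of_le hM le_rfl)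

section StackSort

variable {l : List ℕ}

lemma length_take_idxOf_max_lt (hl : l ≠ []) :
    (l.take (l.idxOf (l.foldr max 0))).length < l.length := by
  have := List.idxOf_lt_length_iff.2 (foldr_max_zero_mem hl)
  simp only [List.length_take]
  omega

lemma length_drop_idxOf_max_lt (hl : l ≠ []) :
    (l.drop (l.idxOf (l.foldr max 0) + 1)).length < l.length := by
  have := List.length_pos_iff.2 hl
  simp only [List.length_drop]
  omega

@[simp] lemma stackSort_nil : stackSort [] = [] := rfl

lemma stackSortFuel_eq_stackSort {f : ℕ} (h : l.length ≤ f) :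
    stackSortFuel f l = stackSort l := by
  induction f using Nat.strong_induction_on generalizing l with
  | _ f ih =>
  obtain _ | ⟨a, t⟩ := l
  · cases f <;> rfl
  obtain ⟨g, rfl⟩ : ∃ g, f = g + 1 := ⟨f - 1, by simp at h; omega⟩
  have ht : t.length ≤ g := by simpa using h
  have htake := length_take_idxOf_max_lt (List.cons_ne_nil a t)
  have hdrop := length_drop_idxOf_max_lt (List.cons_ne_nil a t)
  simp only [List.length_cons, Order.lt_add_one_iff] at htake hdrop
  show stackSortFuel (g + 1) (a :: t) = stackSortFuel (t.length + 1) (a :: t)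
  simp only [stackSortFuel]
  rw [ih g (by omega) (htake.trans ht), ih g (by omega) (hdrop.trans ht),
    ih t.length (by omega) htake, ih t.length (by omega) hdrop]

lemma stackSort_eq_of_ne_nil (hl : l ≠ []) :
    stackSort l = stackSort (l.take (l.idxOf (l.foldr max 0))) ++
      stackSort (l.drop (l.idxOf (l.foldr max 0) + 1)) ++ [l.foldr max 0] := by
  obtain _ | ⟨a, t⟩ := l
  · exact absurd rfl hl
  have htake := length_take_idxOf_max_lt hl
  have hdrop := length_drop_idxOf_max_lt hl
  simp only [List.length_cons, Order.lt_add_one_iff] at htake hdrop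
  show stackSortFuel (t.length + 1) (a :: t) = _
  simp only [stackSortFuel]
  rw [stackSortFuel_eq_stackSort htake, stackSortFuel_eq_stackSort hdrop]

lemma length_stackSort (l : List ℕ) : (stackSort l).length = l.length := by
  induction h : l.length using Nat.strong_induction_on generalizing l with
  | _ n ih =>
  obtain rfl | hl := eq_or_ne l []
  · subst h; rfl
  have hi : l.idxOf (l.foldr max 0) < l.length :=
    List.idxOf_lt_length_iff.2 (foldr_max_zero_mem hl)
  rw [stackSort_eq_of_ne_nil hl, List.length_append, List.length_append,
    ih _ (h ▸ length_take_idxOf_max_lt hl) _ rfl, ih _ (h ▸ length_drop_idxOf_max_lt hl) _ rfl]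
  simp only [List.length_take, List.length_drop, List.length_singleton]
  omega

lemma stackSort_append_cons_of_forall_lt {L R : List ℕ} {M : ℕ} (h : ∀ x ∈ L ++ R, x < M) :
    stackSort (L ++ M :: R) = stackSort L ++ stackSort R ++ [M] := by
  have hmax : (L ++ M :: R).foldr max 0 = M :=
    foldr_max_zero_eq_of_mem (by simp) fun x hx => by
      rcases List.mem_append.1 hx with hx | hx
      · exact (h x (by simp [hx])).le
      · rcases List.mem_cons.1 hx with rfl | hx
        · rfl
        · exact (h x (by simp [hx])).le
  have hidx : (L ++ M :: R).idxOf M = L.length := by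
    rw [List.idxOf_append_of_notMem fun hM => (h M (by simp [hM])).false]
    simp
  rw [stackSort_eq_of_ne_nil (by simp), hmax, hidx]
  simp

end StackSort

section Extensions

variable {N : ℕ}

def extLast (w : Equiv.Perm (Fin N)) : Equiv.Perm (Fin (N + 1)) where
  toFun := Fin.lastCases (Fin.last N) fun j => (w j).castSucc
  invFun := Fin.lastCases (Fin.last N) fun j => (w.symm j).castSucc
  left_inv i := by cases i using Fin.lastCases <;> simp
  right_inv i := by cases i using Fin.lastCases <;> simp

@[simp] lemma extLast_castSucc (w : Equiv.Perm (Fin N)) (j : Fin N) :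
    extLast w j.castSucc = (w j).castSucc := by
  simp [extLast]

@[simp] lemma extLast_last (w : Equiv.Perm (Fin N)) : extLast w (Fin.last N) = Fin.last N := by
  simp [extLast]

lemma extLast_injective : Function.Injective (extLast (N := N)) := fun a b hab =>
  Equiv.ext fun j => Fin.castSucc_injective N <| by rw [← extLast_castSucc, hab, extLast_castSucc]

lemma exists_extLast_eq_iff {v : Equiv.Perm (Fin (N + 1))} :
    (∃ w, extLast w = v) ↔ v (Fin.last N) = Fin.last N := by
  refine ⟨fun ⟨w, hw⟩ => hw ▸ extLast_last w, fun hv => ?_⟩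
  have hne : ∀ {u : Equiv.Perm (Fin (N + 1))}, u (Fin.last N) = Fin.last N →
      ∀ j : Fin N, u j.castSucc ≠ Fin.last N := fun {u} hu j hj =>
    (Fin.castSucc_lt_last j).ne (Equiv.injective u (hj.trans hu.symm))
  have hv' : v.symm (Fin.last N) = Fin.last N := by rw [Equiv.symm_apply_eq, hv]
  refine ⟨⟨fun j => (v j.castSucc).castPred (hne hv j),
    fun j => (v.symm j.castSucc).castPred (hne hv' j), fun j => by simp, fun j => by simp⟩, ?_⟩
  ext i
  cases i using Fin.lastCases <;> simp [hv]

-- Precomposing with the inverse rotation shifts every letter one place right; `N + 1` comes first.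
def consFirst (w : Equiv.Perm (Fin N)) : Equiv.Perm (Fin (N + 1)) :=
  extLast w * (finRotate (N + 1)).symm

@[simp] lemma consFirst_zero (w : Equiv.Perm (Fin N)) : consFirst w 0 = Fin.last N := by
  have : (finRotate (N + 1)).symm 0 = Fin.last N := by rw [Equiv.symm_apply_eq, finRotate_last]
  simp [consFirst, this]

@[simp] lemma consFirst_succ (w : Equiv.Perm (Fin N)) (j : Fin N) :
    consFirst w j.succ = (w j).castSucc := by
  have : (finRotate (N + 1)).symm j.succ = j.castSucc := by
    rw [Equiv.symm_apply_eq, finRotate_apply, Fin.coeSucc_eq_succ]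
  simp [consFirst, this]

lemma consFirst_injective : Function.Injective (consFirst (N := N)) :=
  (mul_left_injective _).comp extLast_injective

lemma exists_consFirst_eq_iff {v : Equiv.Perm (Fin (N + 1))} :
    (∃ w, consFirst w = v) ↔ v 0 = Fin.last N := by
  refine ⟨fun ⟨w, hw⟩ => hw ▸ consFirst_zero w, fun hv => ?_⟩
  obtain ⟨w, hw⟩ := exists_extLast_eq_iff.2 (show (v * finRotate (N + 1)) (Fin.last N) = _ by
    simp [hv])
  exact ⟨w, by rw [consFirst, hw, ← Equiv.Perm.inv_def, mul_inv_cancel_right]⟩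

lemma oneLine_extLast (w : Equiv.Perm (Fin N)) : oneLine (extLast w) = oneLine w ++ [N + 1] := by
  rw [oneLine, List.ofFn_succ']
  simp [oneLine]

lemma oneLine_consFirst (w : Equiv.Perm (Fin N)) :
    oneLine (consFirst w) = (N + 1) :: oneLine w := by
  simp [oneLine, List.ofFn_succ]

end Extensions

section Descents

variable {N : ℕ}

lemma descents_extLast (w : Equiv.Perm (Fin N)) : descents (extLast w) = descents w := by
  unfold descents
  rw [eq_comm, ← card_map Fin.castSuccEmb]
  refine congrArg card (ext fun i => ?_)
  cases i using Fin.lastCases with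
  | last => simpa [Fin.exists_fin_succ'] using fun x : Fin N => by omega
  | cast a => simp [Fin.exists_fin_succ', not_lt.2 (Fin.le_last _)]

lemma descents_consFirst (hN : 1 ≤ N) (w : Equiv.Perm (Fin N)) :
    descents (consFirst w) = descents w + 1 := by
  unfold descents
  rw [eq_comm, ← card_map (Fin.succEmb N), ← card_insert_of_notMem (a := 0) (by simp)]
  refine congrArg card (ext fun i => ?_)
  cases i using Fin.cases with
  | zero => simpa [Fin.exists_fin_succ] using ⟨⟨0, hN⟩, rfl⟩
  | succ a => simp [Fin.exists_fin_succ]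

end Descents

section SortsInto

variable {N : ℕ} {k : ℕ}

lemma lt_of_mem_oneLine {w : Equiv.Perm (Fin N)} {x : ℕ} (hx : x ∈ oneLine w) : x < N + 1 := by
  obtain ⟨i, rfl⟩ := List.mem_ofFn.1 hx
  simp

lemma sortsInto_succ_iff_of_stackSort_eq {v : Equiv.Perm (Fin (N + 1))} {w : Equiv.Perm (Fin N)}
    (h : stackSort (oneLine v) = stackSort (oneLine w) ++ [N + 1]) :
    SortsInto (N + 1) k v ↔ SortsInto N k w := by
  have hlen : (stackSort (oneLine w)).length = N := by simp [length_stackSort, oneLine]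
  simp only [SortsInto, h]
  refine ⟨fun hv i hki hiN => ?_, fun hw i hki hiN => ?_⟩
  · have := hv i hki (by omega)
    rwa [List.getD_append _ _ _ _ (by omega)] at this
  · rcases Nat.lt_or_ge i N with hi | hi
    · rw [List.getD_append _ _ _ _ (by omega)]
      exact hw i hki hi
    · obtain rfl : i = N := by omega
      simp [hlen]

lemma sortsInto_extLast (w : Equiv.Perm (Fin N)) :
    SortsInto (N + 1) k (extLast w) ↔ SortsInto N k w := by
  refine sortsInto_succ_iff_of_stackSort_eq ?_
  simpa [oneLine_extLast] using
    stackSort_append_cons_of_forall_lt (R := []) fun x hx =>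
      lt_of_mem_oneLine (w := w) (by simpa using hx)

lemma sortsInto_consFirst (w : Equiv.Perm (Fin N)) :
    SortsInto (N + 1) k (consFirst w) ↔ SortsInto N k w := by
  refine sortsInto_succ_iff_of_stackSort_eq ?_
  simpa [oneLine_consFirst] using
    stackSort_append_cons_of_forall_lt (L := []) fun x hx =>
      lt_of_mem_oneLine (w := w) (by simpa using hx)

end SortsInto

lemma sum_filter_eq_sum_filter_comp {α β M : Type*} [Fintype α] [Fintype β] [AddCommMonoid M]
    {e : α → β} (he : Function.Injective e) {p : β → Prop} [DecidablePred p]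
    (hp : ∀ b, p b → ∃ a, e a = b) (f : β → M) :
    ∑ b ∈ univ.filter p, f b = ∑ a ∈ univ.filter (fun a => p (e a)), f (e a) := by
  refine Eq.trans ?_ (sum_map (univ.filter fun a => p (e a)) ⟨e, he⟩ f)
  refine sum_congr (ext fun b => ?_) fun _ _ => rfl
  simp only [mem_filter, mem_univ, true_and, mem_map, Function.Embedding.coeFn_mk]
  refine ⟨fun hb => ?_, fun ⟨a, ha, hab⟩ => hab ▸ ha⟩
  obtain ⟨a, rfl⟩ := hp b hb
  exact ⟨a, hb, rfl⟩

lemma sum_filter_sortsInto_last_fixed (N k : ℕ) (hN : 1 ≤ N) :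
    ∑ v ∈ univ.filter (fun v : Equiv.Perm (Fin (N + 1)) =>
        SortsInto (N + 1) k v ∧ (v ⟨0, by omega⟩ : ℕ) + 1 ≤ N - 1 ∧
          (v ⟨N, by omega⟩ : ℕ) + 1 = N + 1),
      (X : ℚ[X]) ^ descents v =
    ∑ w ∈ univ.filter (fun w : Equiv.Perm (Fin N) =>
        SortsInto N k w ∧ ¬ (w ⟨0, hN⟩ : ℕ) + 1 = N),
      (X : ℚ[X]) ^ descents w := by
  rw [sum_filter_eq_sum_filter_comp extLast_injective
    fun v hv => exists_extLast_eq_iff.2 (Fin.ext (Nat.add_right_cancel hv.2.2))]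
  refine sum_congr (filter_congr fun w _ => ?_) fun w _ => by rw [descents_extLast]
  have h0 : (⟨0, by omega⟩ : Fin (N + 1)) = (⟨0, hN⟩ : Fin N).castSucc := rfl
  have hw0 := (w ⟨0, hN⟩).isLt
  rw [h0, sortsInto_extLast, extLast_castSucc, show (⟨N, _⟩ : Fin (N + 1)) = Fin.last N from rfl,
    extLast_last]
  simp only [Fin.val_castSucc, Fin.val_last, and_true]
  exact and_congr_right fun _ => by omega

lemma sum_filter_sortsInto_first_max {N M : ℕ} (k : ℕ) (hNM : N = M + 1) (hM : 1 ≤ M) :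
    ∑ v ∈ univ.filter (fun v : Equiv.Perm (Fin N) =>
        SortsInto N k v ∧ (v ⟨0, by omega⟩ : ℕ) + 1 = N),
      (X : ℚ[X]) ^ descents v =
    X * ∑ w ∈ univ.filter (fun w : Equiv.Perm (Fin M) => SortsInto M k w),
      (X : ℚ[X]) ^ descents w := by
  subst hNM
  rw [sum_filter_eq_sum_filter_comp consFirst_injective
    fun v hv => exists_consFirst_eq_iff.2 (Fin.ext (by simpa using hv.2)), mul_sum]
  refine sum_congr (filter_congr fun w _ => ?_) fun w _ => by rw [descents_consFirst hM, pow_succ']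
  simp [sortsInto_consFirst]

/-- The descent generating function of
`{w ∈ 𝔖_{n+k+1} : s(w) ∈ 𝔖_{n+1,k}, w(1) ≤ n+k-1, w(n+k+1) = n+k+1}`
equals `N_{n,k}(x) - x N_{n-1,k}(x)`. -/
theorem H1_identity (n k : ℕ) (hn : 1 ≤ n) (hk : 1 ≤ k) :
    ∑ w ∈ Finset.univ.filter (fun w : Equiv.Perm (Fin (n + k + 1)) =>
        SortsInto (n + k + 1) k w ∧ (w ⟨0, by omega⟩ : ℕ) + 1 ≤ n + k - 1 ∧
          (w ⟨n + k, by omega⟩ : ℕ) + 1 = n + k + 1),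
      (X : Polynomial ℚ) ^ descents w =
    Nnk n k - X * Nnk (n - 1) k := by
  have hsplit := sum_filter_add_sum_filter_not
    (univ.filter fun w : Equiv.Perm (Fin (n + k)) => SortsInto (n + k) k w)
    (fun w => (w ⟨0, by omega⟩ : ℕ) + 1 = n + k) (fun w => (X : ℚ[X]) ^ descents w)
  rw [filter_filter, filter_filter,
    sum_filter_sortsInto_first_max k (show n + k = n - 1 + k + 1 by omega) (by omega)] at hsplit
  rw [sum_filter_sortsInto_last_fixed (n + k) k (by omega), Nnk, Nnk, ← hsplit]
  ring
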